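/- Let A ∈ 𝒮ⁿ[k] be a Robinson matrix and d ∈ 𝔻ᵏ. Then d satisfies the path condition for A if and only if β⁺(C)ᵀ d > 0 for every upper-bound-cycle C of A. -/

import Mathlib

/-- The standard unit vector `χ_t ∈ ℤᵏ` (as a function `ℕ → ℤ`, supported on index `t`). -/
def chi (t : ℕ) : ℕ → ℤ := fun i => if i = t then 1 else 0

/-- The dot product `bᵀ d = Σ_{i=1}^k b_i d_i`. -/
def dotProd (k : ℕ) (b : ℕ → ℤ) (d : ℕ → ℝ) : ℝ :=
  ∑ i ∈ Finset.Icc 1 k, (b i : ℝ) * d i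

/-- `A ∈ 𝒮ⁿ[k]`: a symmetric matrix with entries in `{0,…,k}`, diagonal `k`,
entries increasing towards the diagonal. -/
def IsRobinson (n k : ℕ) (a : Fin n → Fin n → ℕ) : Prop :=
  (∀ u v, a u v = a v u) ∧ (∀ u, a u u = k) ∧ (∀ u v, a u v ≤ k) ∧
    ∀ u v w : Fin n, u < v → v < w → a u w ≤ a u v ∧ a u w ≤ a v w

/-- `d ∈ 𝔻ᵏ`: threshold vectors with `d 1 > d 2 > ⋯ > d k > 0`
(values outside `{1,…,k}` are irrelevant). -/
def IsThreshold (k : ℕ) (d : ℕ → ℝ) : Prop :=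
  (∀ i, 1 ≤ i → i < k → d (i + 1) < d i) ∧ 0 < d k

/-- Uniform embedding: for all pairs `u,v` and all `t ≤ k`,
`a u v = t ↔ d_{t+1} < |f v − f u| ≤ d_t`, with conventions `d_0 = +∞`, `d_{k+1} = −∞`. -/
def IsUnifEmb (n k : ℕ) (a : Fin n → Fin n → ℕ) (d : ℕ → ℝ)
    (f : Fin n → ℝ) : Prop :=
  ∀ u v : Fin n, ∀ t : ℕ, t ≤ k →
    (a u v = t ↔ (t = k ∨ d (t + 1) < |f v - f u|) ∧ (t = 0 ∨ |f v - f u| ≤ d t))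

/-- The strict inequality system: for all `u < v` and all `t ≤ k`,
`a u v = t ↔ d_{t+1} < f v − f u < d_t`, with conventions `d_0 = +∞`, `d_{k+1} = 0`. -/
def SatisfiesStrict (n k : ℕ) (a : Fin n → Fin n → ℕ) (d : ℕ → ℝ)
    (f : Fin n → ℝ) : Prop :=
  ∀ u v : Fin n, u < v → ∀ t : ℕ, t ≤ k →
    (a u v = t ↔ ((if t = k then (0 : ℝ) else d (t + 1)) < f v - f u) ∧
      (t = 0 ∨ f v - f u < d t))

/-- `β⁺(x,y)`: for `x < y`, `β⁺(x,y) = χ_{a x y}` (junk value `χ_0` when `a x y = 0`,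
where it is undefined); for `x > y`, `β⁺(x,y) = −β⁻(y,x)`. -/
def betaP {n : ℕ} (k : ℕ) (a : Fin n → Fin n → ℕ) (x y : Fin n) : ℕ → ℤ :=
  if x < y then chi (a x y)
  else if y < x then (if a x y = k then 0 else -chi (a x y + 1))
  else 0

/-- `β⁻(x,y)`: for `x < y`, `β⁻(x,y) = χ_{a x y + 1}` if `a x y < k` and `0` if `a x y = k`;
for `x > y`, `β⁻(x,y) = −β⁺(y,x)`. -/
def betaM {n : ℕ} (k : ℕ) (a : Fin n → Fin n → ℕ) (x y : Fin n) : ℕ → ℤ :=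
  if x < y then (if a x y = k then 0 else chi (a x y + 1))
  else if y < x then -chi (a x y)
  else 0

/-- `β⁺(W) = Σ_i β⁺(w_{i−1}, w_i)` over the steps of the walk `W`. -/
def betaPWalk {n : ℕ} (k : ℕ) (a : Fin n → Fin n → ℕ) (w : List (Fin n)) : ℕ → ℤ :=
  ((w.zip w.tail).map fun p => betaP k a p.1 p.2).sum

/-- `β⁻(W) = Σ_i β⁻(w_{i−1}, w_i)` over the steps of the walk `W`. -/
def betaMWalk {n : ℕ} (k : ℕ) (a : Fin n → Fin n → ℕ) (w : List (Fin n)) : ℕ → ℤ :=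
  ((w.zip w.tail).map fun p => betaM k a p.1 p.2).sum

/-- A `(u,v)`-upper-bound-walk: a walk from `u` to `v` with consecutive entries distinct,
in which every increasing step is an edge (`a x y ≥ 1`). -/
def IsUBWalk {n : ℕ} (a : Fin n → Fin n → ℕ) (u v : Fin n) (w : List (Fin n)) : Prop :=
  w.head? = some u ∧ w.getLast? = some v ∧
    List.Chain' (fun x y => x ≠ y ∧ (x < y → 1 ≤ a x y)) w

/-- A `(u,v)`-lower-bound-walk: a walk from `u` to `v` with consecutive entries distinct,
in which every decreasing step is an edge (`a x y ≥ 1`). -/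
def IsLBWalk {n : ℕ} (a : Fin n → Fin n → ℕ) (u v : Fin n) (w : List (Fin n)) : Prop :=
  w.head? = some u ∧ w.getLast? = some v ∧
    List.Chain' (fun x y => x ≠ y ∧ (y < x → 1 ≤ a x y)) w

/-- An upper-bound-cycle: a `(u,u)`-upper-bound-walk of length `p ≥ 2` in which
`u = w_0 = w_p` is the only repeated vertex. -/
def IsUBCycle {n : ℕ} (a : Fin n → Fin n → ℕ) (w : List (Fin n)) : Prop :=
  ∃ u : Fin n, IsUBWalk a u u w ∧ 3 ≤ w.length ∧ w.dropLast.Nodup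

/-- The path condition for `A` and `d`: for all `u < v`, every `(u,v)`-upper-bound-path `W₁`
and every `(u,v)`-lower-bound-path `W₂` satisfy `β⁻(W₂)ᵀ d < β⁺(W₁)ᵀ d`. -/
def PathCondition (n k : ℕ) (a : Fin n → Fin n → ℕ) (d : ℕ → ℝ) : Prop :=
  ∀ u v : Fin n, u < v → ∀ w₁ w₂ : List (Fin n),
    IsUBWalk a u v w₁ → w₁.Nodup → IsLBWalk a u v w₂ → w₂.Nodup →
      dotProd k (betaMWalk k a w₂) d < dotProd k (betaPWalk k a w₁) d

/-- The prefix-sum partial order `⪯` on `ℤᵏ`. -/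
def Preceq (k : ℕ) (x y : ℕ → ℤ) : Prop :=
  ∀ t, 1 ≤ t → t ≤ k → ∑ i ∈ Finset.Icc 1 t, x i ≤ ∑ i ∈ Finset.Icc 1 t, y i

/-!
Since `A` is symmetric, reversing a walk exchanges upper- and lower-bound walks and turns `β⁻`
into `-β⁺`. So an upper-bound path `W₁` and a lower-bound path `W₂` from `u` to `v` glue to a
closed upper-bound walk `W₁ W₂⁻¹` of weight `β⁺(W₁) - β⁻(W₂)`; conversely an upper-bound-cycle
starting with the step `u → x` is that step followed by a path back, and one of the two is the
upper-bound path from `min u x` to `max u x`, the other the reverse of a lower-bound path.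
Positivity on cycles propagates to all closed upper-bound walks of length at least two: at a
repeated vertex such a walk splits into a cycle and a shorter closed walk, and `β⁺` is additive
under the split.
-/

section StepSum

variable {α M : Type*}

def stepSum [AddCommMonoid M] (g : α → α → M) (l : List α) : M :=
  ((l.zip l.tail).map fun p => g p.1 p.2).sum

variable [AddCommMonoid M] (g : α → α → M)

@[simp] theorem stepSum_singleton (x : α) : stepSum g [x] = 0 := rfl

@[simp] theorem stepSum_cons_cons (x y : α) (l : List α) :
    stepSum g (x :: y :: l) = g x y + stepSum g (y :: l) := by
  simp [stepSum]

theorem stepSum_append_cons (l₁ : List α) (x : α) (l₂ : List α) :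
    stepSum g (l₁ ++ x :: l₂) = stepSum g (l₁ ++ [x]) + stepSum g (x :: l₂) := by
  induction l₁ using List.twoStepInduction with
  | nil => simp
  | singleton y => simp
  | cons_cons y z l _ ih =>
    simp only [List.cons_append, stepSum_cons_cons] at ih ⊢
    rw [ih, add_assoc]

theorem stepSum_reverse (l : List α) : stepSum g l.reverse = stepSum (fun x y => g y x) l := by
  induction l using List.twoStepInduction with
  | nil => rfl
  | singleton x => rfl
  | cons_cons x y l _ ih =>
    rw [List.reverse_cons, List.reverse_cons, List.append_assoc, List.singleton_append,
      stepSum_append_cons, ← List.reverse_cons, ih]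
    simp [add_comm]

theorem map_stepSum {N F : Type*} [AddCommMonoid N] [FunLike F M N] [AddMonoidHomClass F M N]
    (f : F) (l : List α) : f (stepSum g l) = stepSum (fun x y => f (g x y)) l := by
  simp [stepSum, map_list_sum, List.map_map, Function.comp_def]

theorem stepSum_append_cons_append_cons (l₁ : List α) (x : α) (l₂ r : List α) :
    stepSum g (l₁ ++ x :: (l₂ ++ x :: r)) =
      stepSum g (x :: (l₂ ++ [x])) + stepSum g (l₁ ++ x :: r) := by
  rw [stepSum_append_cons g l₁ x, stepSum_append_cons g l₁ x r, ← List.cons_append,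
    stepSum_append_cons g (x :: l₂) x r, add_left_comm, List.cons_append]

end StepSum

theorem stepSum_neg {α G : Type*} [AddCommGroup G] (g : α → α → G) (l : List α) :
    stepSum (fun x y => -g x y) l = -stepSum g l :=
  (map_stepSum g (negAddMonoidHom (α := G)) l).symm

namespace List

variable {α : Type*}

theorem Duplicate.exists_eq_append_cons_append_cons {x : α} {l : List α}
    (h : Duplicate x l) : ∃ l₁ l₂ l₃, l = l₁ ++ x :: (l₂ ++ x :: l₃) := by
  induction h with
  | cons_mem hm =>
    obtain ⟨s, t, rfl⟩ := append_of_mem hm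
    exact ⟨[], s, t, rfl⟩
  | cons_duplicate _ ih =>
    obtain ⟨l₁, l₂, l₃, rfl⟩ := ih
    exact ⟨_ :: l₁, l₂, l₃, rfl⟩

theorem isChain_append_cons_append_cons {R : α → α → Prop} {l₁ : List α} {x : α}
    {l₂ r : List α} :
    IsChain R (l₁ ++ x :: (l₂ ++ x :: r)) ↔
      IsChain R (x :: (l₂ ++ [x])) ∧ IsChain R (l₁ ++ x :: r) := by
  rw [isChain_split (l₂ := l₂ ++ x :: r), isChain_split (l₁ := l₁) (l₂ := r), ← cons_append,
    isChain_split (l₂ := r)]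
  tauto

theorem exists_eq_append_cons_append_cons_of_not_nodup_dropLast {w : List α}
    (h : ¬ w.dropLast.Nodup) : ∃ l₁ x l₂ r, w = l₁ ++ x :: (l₂ ++ x :: r) ∧ r ≠ [] := by
  obtain ⟨x, hx⟩ := exists_duplicate_iff_not_nodup.2 h
  obtain ⟨l₁, l₂, l₃, hdrop⟩ := hx.exists_eq_append_cons_append_cons
  have hw : w ≠ [] := by rintro rfl; exact h nodup_nil
  refine ⟨l₁, x, l₂, l₃ ++ [w.getLast hw], ?_, by simp⟩
  conv_lhs => rw [← dropLast_append_getLast hw, hdrop]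
  simp

end List

section ClosedWalk

variable {α M : Type*} [AddCommMonoid M] [PartialOrder M] [IsOrderedCancelAddMonoid M]
  {R : α → α → Prop} {g : α → α → M}

theorem stepSum_pos_of_closed_isChain (hR : ∀ x, ¬ R x x)
    (hcyc : ∀ u c, c.IsChain R → c.head? = some u → c.getLast? = some u → 3 ≤ c.length →
      c.dropLast.Nodup → 0 < stepSum g c)
    {u : α} {w : List α} (hw : w.IsChain R) (hhead : w.head? = some u)
    (hlast : w.getLast? = some u) (hlen : 2 ≤ w.length) : 0 < stepSum g w := by
  by_cases hnd : w.dropLast.Nodup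
  · rcases (show w.length = 2 ∨ 3 ≤ w.length by omega) with h2 | h3
    · obtain ⟨x, y, rfl⟩ := List.length_eq_two.1 h2
      simp only [List.head?_cons, List.getLast?_cons_cons, List.getLast?_singleton,
        Option.some.injEq] at hhead hlast
      obtain rfl := hhead
      obtain rfl := hlast
      exact (hR _ (List.isChain_pair.1 hw)).elim
    · exact hcyc u w hw hhead hlast h3 hnd
  obtain ⟨l₁, x, l₂, r, hsplit, hr⟩ :=
    List.exists_eq_append_cons_append_cons_of_not_nodup_dropLast hnd
  have hr_pos : 0 < r.length := List.length_pos_iff.2 hr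
  rw [hsplit] at hw hhead hlast ⊢
  obtain ⟨hcycle, hrest⟩ := List.isChain_append_cons_append_cons.1 hw
  rw [stepSum_append_cons_append_cons]
  refine add_pos (stepSum_pos_of_closed_isChain hR hcyc hcycle rfl ?_ ?_)
    (stepSum_pos_of_closed_isChain hR hcyc (u := u) hrest ?_ ?_ ?_)
  · rw [← List.cons_append, List.getLast?_concat]
  · simp
  · simpa [List.head?_append] using hhead
  · rw [List.getLast?_append_cons, ← List.cons_append, List.getLast?_append_cons] at hlast
    rwa [List.getLast?_append_cons]
  · simp only [List.length_append, List.length_cons]; omega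
termination_by w.length
decreasing_by
  all_goals
    simp only [hsplit, List.length_append, List.length_cons, List.length_nil]
    omega

end ClosedWalk

def dotProdHom (k : ℕ) (d : ℕ → ℝ) : (ℕ → ℤ) →+ ℝ where
  toFun b := dotProd k b d
  map_zero' := by simp [dotProd]
  map_add' b c := by simp [dotProd, add_mul, Finset.sum_add_distrib]

theorem dotProd_add (k : ℕ) (b c : ℕ → ℤ) (d : ℕ → ℝ) :
    dotProd k (b + c) d = dotProd k b d + dotProd k c d :=
  map_add (dotProdHom k d) b c

theorem dotProd_neg (k : ℕ) (b : ℕ → ℤ) (d : ℕ → ℝ) : dotProd k (-b) d = -dotProd k b d :=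
  map_neg (dotProdHom k d) b

section Robinson

variable {n : ℕ} (k : ℕ) {a : Fin n → Fin n → ℕ}

theorem dotProd_betaPWalk (d : ℕ → ℝ) (w : List (Fin n)) :
    dotProd k (betaPWalk k a w) d = stepSum (fun x y => dotProd k (betaP k a x y) d) w :=
  map_stepSum (betaP k a) (dotProdHom k d) w

theorem betaPWalk_append_cons (l₁ : List (Fin n)) (x : Fin n) (l₂ : List (Fin n)) :
    betaPWalk k a (l₁ ++ x :: l₂) = betaPWalk k a (l₁ ++ [x]) + betaPWalk k a (x :: l₂) :=
  stepSum_append_cons (betaP k a) l₁ x l₂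

theorem betaP_swap (hsymm : ∀ u v, a u v = a v u) (x y : Fin n) :
    betaP k a y x = -betaM k a x y := by
  rcases lt_trichotomy x y with h | rfl | h
  · simp only [betaP, betaM, if_neg h.not_gt, if_pos h, hsymm y x]
    split_ifs <;> simp
  · simp [betaP, betaM]
  · simp [betaP, betaM, h, h.not_gt, hsymm y x]

theorem betaPWalk_reverse (hsymm : ∀ u v, a u v = a v u) (w : List (Fin n)) :
    betaPWalk k a w.reverse = -betaMWalk k a w := by
  change stepSum (betaP k a) w.reverse = -stepSum (betaM k a) w
  simp only [stepSum_reverse, betaP_swap k hsymm, stepSum_neg]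

theorem betaMWalk_reverse (hsymm : ∀ u v, a u v = a v u) (w : List (Fin n)) :
    betaMWalk k a w.reverse = -betaPWalk k a w := by
  rw [← neg_neg (betaMWalk k a w.reverse), ← betaPWalk_reverse k hsymm, List.reverse_reverse]

variable {k}

theorem IsUBWalk.reverse (hsymm : ∀ u v, a u v = a v u) {u v : Fin n} {w : List (Fin n)}
    (h : IsUBWalk a u v w) : IsLBWalk a v u w.reverse := by
  obtain ⟨hhead, hlast, hchain⟩ := h
  refine ⟨List.head?_reverse ▸ hlast, List.getLast?_reverse ▸ hhead,
    List.isChain_reverse.2 (hchain.imp ?_)⟩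
  rintro x y ⟨hne, hedge⟩
  exact ⟨hne.symm, fun hlt => hsymm x y ▸ hedge hlt⟩

theorem IsLBWalk.reverse (hsymm : ∀ u v, a u v = a v u) {u v : Fin n} {w : List (Fin n)}
    (h : IsLBWalk a u v w) : IsUBWalk a v u w.reverse := by
  obtain ⟨hhead, hlast, hchain⟩ := h
  refine ⟨List.head?_reverse ▸ hlast, List.getLast?_reverse ▸ hhead,
    List.isChain_reverse.2 (hchain.imp ?_)⟩
  rintro x y ⟨hne, hedge⟩
  exact ⟨hne.symm, fun hlt => hsymm x y ▸ hedge hlt⟩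

end Robinson

section PathCondition

variable {n k : ℕ} {a : Fin n → Fin n → ℕ} {d : ℕ → ℝ}

theorem PathCondition.dotProd_betaPWalk_pos (hsymm : ∀ u v, a u v = a v u)
    (h : PathCondition n k a d) {C : List (Fin n)} (hC : IsUBCycle a C) :
    0 < dotProd k (betaPWalk k a C) d := by
  obtain ⟨u, ⟨hhead, hlast, hchain⟩, hlen, hnd⟩ := hC
  obtain ⟨c, rfl⟩ := List.getLast?_eq_some_iff.1 hlast
  obtain ⟨x, p, rfl⟩ : ∃ x p, c = u :: x :: p := by
    match c, hlen with
    | y :: x :: p, _ => exact ⟨x, p, by simpa using hhead⟩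
  rw [List.dropLast_concat] at hnd
  obtain ⟨hux, hpath⟩ := List.isChain_cons_cons.1 hchain
  have hW : IsUBWalk a x u (x :: p ++ [u]) := ⟨rfl, List.getLast?_concat, hpath⟩
  have hWnd : (x :: p ++ [u]).Nodup := List.nodup_append_comm.1 hnd
  rw [show u :: x :: p ++ [u] = [u] ++ x :: (p ++ [u]) from rfl, betaPWalk_append_cons,
    dotProd_add]
  rcases hux.1.lt_or_gt with hlt | hgt
  · have := h u x hlt [u, x] (x :: p ++ [u]).reverse ⟨rfl, rfl, List.isChain_pair.2 hux⟩
      (by simpa using hux.1) (hW.reverse hsymm) (List.nodup_reverse.2 hWnd)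
    rw [betaMWalk_reverse k hsymm, dotProd_neg] at this
    simp only [List.cons_append, List.nil_append] at this ⊢
    linarith
  · have := h x u hgt (x :: p ++ [u]) [x, u] hW hWnd
      ⟨rfl, rfl, List.isChain_pair.2 ⟨hux.1.symm, fun h => absurd h hgt.asymm⟩⟩
      (by simpa using hux.1.symm)
    rw [show [x, u] = [u, x].reverse from rfl, betaMWalk_reverse k hsymm, dotProd_neg] at this
    simp only [List.cons_append, List.nil_append] at this ⊢
    linarith

theorem pathCondition_of_forall_isUBCycle (hsymm : ∀ u v, a u v = a v u)
    (hcyc : ∀ C, IsUBCycle a C → 0 < dotProd k (betaPWalk k a C) d) :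
    PathCondition n k a d := by
  intro u v huv w₁ w₂ hw₁ _ hw₂ _
  obtain ⟨p, rfl⟩ := List.getLast?_eq_some_iff.1 hw₁.2.1
  obtain ⟨hv, hu, hchain₂⟩ := hw₂.reverse hsymm
  obtain ⟨t, ht⟩ := List.head?_eq_some_iff.1 hv
  have hp : p ≠ [] := by
    rintro rfl
    exact huv.ne' (by simpa using hw₁.1)
  have hclosed : 0 < dotProd k (betaPWalk k a (p ++ v :: t)) d := by
    rw [dotProd_betaPWalk]
    refine stepSum_pos_of_closed_isChain (R := fun x y => x ≠ y ∧ (x < y → 1 ≤ a x y))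
      (fun _ hx => hx.1 rfl)
      (fun u c hc hh hl hlen hnd => ?_) (u := u) ?_ ?_ ?_ ?_
    · rw [← dotProd_betaPWalk]
      exact hcyc c ⟨u, ⟨hh, hl, hc⟩, hlen, hnd⟩
    · exact List.isChain_split.2 ⟨hw₁.2.2, ht ▸ hchain₂⟩
    · simpa [List.head?_append] using hw₁.1
    · rwa [List.getLast?_append_cons, ← ht]
    · have := List.length_pos_iff.2 hp
      simp only [List.length_append, List.length_cons]
      omega
  rw [betaPWalk_append_cons, ← ht, betaPWalk_reverse k hsymm, dotProd_add, dotProd_neg]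
    at hclosed
  linarith

end PathCondition

theorem statement14_general (n k : ℕ) (a : Fin n → Fin n → ℕ)
    (hA : IsRobinson n k a) (d : ℕ → ℝ) :
    PathCondition n k a d ↔
      ∀ C : List (Fin n), IsUBCycle a C → 0 < dotProd k (betaPWalk k a C) d :=
  ⟨fun h _ hC => h.dotProd_betaPWalk_pos hA.1 hC, pathCondition_of_forall_isUBCycle hA.1⟩

/-- `d ∈ 𝔻ᵏ` satisfies the path condition for the Robinson matrix `A`
if and only if `β⁺(C)ᵀ d > 0` for every upper-bound-cycle `C` of `A`. -/
theorem statement14 (n k : ℕ) (hn : 1 ≤ n) (hk : 1 ≤ k) (a : Fin n → Fin n → ℕ)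
    (hA : IsRobinson n k a) (d : ℕ → ℝ) (hd : IsThreshold k d) :
    PathCondition n k a d ↔
      ∀ C : List (Fin n), IsUBCycle a C → 0 < dotProd k (betaPWalk k a C) d :=
  statement14_general n k a hA d
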